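/- Fix an integer K > 2. For r₁ ∈ (0,1), there exists a configuration r ∈ R_K(r₁) with p(r) = 1/2 if and only if 1/K ≤ r₁ < 1/2; that is, S_K := {r₁ ∈ (0,1) : 1/2 ∈ p(R_K(r₁))} equals the interval [1/K, 1/2). -/

import Mathlib

/-!
With `f x = x / (1 - x)`, the condition `p(r) = 1/2` says `∑_{k ≥ 2} f(r_k) = 1`, where the
`K - 1 ≥ 2` numbers `r_k` are positive and sum to `1 - r₁`. By Cauchy–Schwarz (in Sedrakyan's
form, applied to `f x = 1 / (1 - x) - 1`) this sum is smallest for equal `r_k`, which forces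
`r₁ ≥ 1/K`. Since there are at least two `r_k`, each is below `1 - r₁`, so `f(r_k) < r_k / r₁`
and the sum is below `(1 - r₁) / r₁`, which forces `r₁ < 1/2`. Conversely, moving continuously
from the equal split towards the split in which `r₂` carries everything, the sum passes through
`1` by the intermediate value theorem.
-/

open Finset

lemma two_div_three_add_eq_half_iff (x : ℝ) : 2 / (3 + x) = 1 / 2 ↔ x = 1 := by
  constructor
  · intro h
    have h3 : 3 + x ≠ 0 := by
      rintro h0
      rw [h0, div_zero] at h
      norm_num at h
    field_simp at h
    linarith
  · rintro rfl
    norm_num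

lemma card_mul_sum_div_le_sum_div_one_sub {ι : Type*} (s : Finset ι) {x : ι → ℝ}
    (hx : ∀ i ∈ s, x i < 1) :
    #s * (∑ i ∈ s, x i) / (#s - ∑ i ∈ s, x i) ≤ ∑ i ∈ s, x i / (1 - x i) := by
  rcases s.eq_empty_or_nonempty with rfl | hne
  · simp
  have hpos : ∀ i ∈ s, 0 < 1 - x i := fun i hi => sub_pos.2 (hx i hi)
  have hsum : ∑ i ∈ s, (1 - x i) = #s - ∑ i ∈ s, x i := by simp [sum_sub_distrib]
  have hden : 0 < (#s : ℝ) - ∑ i ∈ s, x i := hsum ▸ sum_pos hpos hne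
  have htitu := sq_sum_div_le_sum_sq_div s (fun _ => (1 : ℝ)) hpos
  simp only [sum_const, nsmul_eq_mul, mul_one, one_pow, hsum] at htitu
  calc #s * (∑ i ∈ s, x i) / (#s - ∑ i ∈ s, x i)
      = (#s : ℝ) ^ 2 / (#s - ∑ i ∈ s, x i) - #s := by field_simp; ring
    _ ≤ ∑ i ∈ s, 1 / (1 - x i) - #s := by gcongr
    _ = ∑ i ∈ s, (1 / (1 - x i) - 1) := by simp [sum_sub_distrib]
    _ = ∑ i ∈ s, x i / (1 - x i) :=
      sum_congr rfl fun i hi => by field_simp [(hpos i hi).ne']; ring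

lemma sum_div_one_sub_lt {ι : Type*} {s : Finset ι} {x : ι → ℝ} (hs : 1 < #s)
    (hx : ∀ i ∈ s, 0 < x i) (hS : ∑ i ∈ s, x i < 1) :
    ∑ i ∈ s, x i / (1 - x i) < (∑ i ∈ s, x i) / (1 - ∑ i ∈ s, x i) := by
  have hlt : ∀ i ∈ s, x i < ∑ j ∈ s, x j := fun i hi => by
    obtain ⟨j, hj, hji⟩ := exists_mem_ne hs i
    exact single_lt_sum hji hi hj (hx j hj) fun k hk _ => (hx k hk).le
  calc ∑ i ∈ s, x i / (1 - x i)
      < ∑ i ∈ s, x i / (1 - ∑ j ∈ s, x j) :=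
        sum_lt_sum_of_nonempty (card_pos.1 (by omega)) fun i hi =>
          div_lt_div_of_pos_left (hx i hi) (by linarith) (by linarith [hlt i hi])
    _ = (∑ i ∈ s, x i) / (1 - ∑ i ∈ s, x i) := (sum_div ..).symm

lemma sub_one_mul_div_le_one_iff {K c : ℝ} (hK : 2 ≤ K) (hc : 0 < c) :
    (K - 1) * (1 - c) / ((K - 1) - (1 - c)) ≤ 1 ↔ 1 / K ≤ c := by
  rw [div_le_one (by linarith), div_le_iff₀ (by linarith)]
  constructor <;> intro h <;> linarith

lemma one_lt_one_sub_div_iff {c : ℝ} (hc : 0 < c) :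
    1 < (1 - c) / (1 - (1 - c)) ↔ c < 1 / 2 := by
  rw [sub_sub_cancel, lt_div_iff₀ hc]
  constructor <;> intro h <;> linarith

lemma exists_div_one_sub_add_mul_div_one_sub_eq_one {m s : ℝ} (hm : 0 ≤ m) (hs0 : 0 < s)
    (hs1 : s < 1) (hlt : 1 < s / (1 - s)) (hle : (m + 1) * s / ((m + 1) - s) ≤ 1) :
    ∃ t ∈ Set.Ioc 0 (s / (m + 1)), (s - m * t) / (1 - (s - m * t)) + m * (t / (1 - t)) = 1 := by
  set t₀ := s / (m + 1) with ht₀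
  have ht₀0 : 0 < t₀ := by positivity
  have ht₀s : t₀ ≤ s := div_le_self hs0.le (by linarith)
  set g : ℝ → ℝ := fun t => (s - m * t) / (1 - (s - m * t)) + m * (t / (1 - t))
  have hcont : ContinuousOn g (Set.Icc 0 t₀) := by
    refine ContinuousOn.add ?_ ?_
    · refine ContinuousOn.div (by fun_prop) (by fun_prop) fun t ht => ?_
      nlinarith [ht.1]
    · refine continuousOn_const.mul (ContinuousOn.div (by fun_prop) (by fun_prop) fun t ht => ?_)
      linarith [ht.2]
  have hg0 : g 0 = s / (1 - s) := by simp [g]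
  have hgt₀ : g t₀ = (m + 1) * s / ((m + 1) - s) := by
    simp only [g, ht₀]
    field_simp
    ring
  obtain ⟨t, ⟨ht0, htt₀⟩, hgt⟩ :=
    intermediate_value_Icc' ht₀0.le hcont ⟨hgt₀ ▸ hle, hg0 ▸ hlt.le⟩
  refine ⟨t, ⟨lt_of_le_of_ne ht0 ?_, htt₀⟩, hgt⟩
  rintro rfl
  linarith [hg0 ▸ hgt]

lemma exists_sorted_of_mem_Ico {K : ℕ} (hK : 2 ≤ K) {c : ℝ}
    (hc : c ∈ Set.Ico (1 / (K : ℝ)) (1 / 2)) :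
    ∃ r : ℕ → ℝ, (∀ k < K, r k ∈ Set.Ioo (0 : ℝ) 1) ∧ ∑ k ∈ range K, r k = 1 ∧
      (∀ i j, 1 ≤ i → i ≤ j → j < K → r j ≤ r i) ∧ r 0 = c ∧
      ∑ k ∈ Ico 1 K, r k / (1 - r k) = 1 := by
  have hK' : (2 : ℝ) ≤ K := by exact_mod_cast hK
  have hc0 : 0 < c := lt_of_lt_of_le (by positivity) hc.1
  have hle : ((K : ℝ) - 2 + 1) * (1 - c) / (((K : ℝ) - 2 + 1) - (1 - c)) ≤ 1 := by
    rw [show (K : ℝ) - 2 + 1 = K - 1 by ring]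
    exact (sub_one_mul_div_le_one_iff hK' hc0).2 hc.1
  obtain ⟨t, ⟨ht0, htt₀⟩, ht⟩ := exists_div_one_sub_add_mul_div_one_sub_eq_one
    (sub_nonneg.2 hK') (by linarith [hc.2]) (by linarith) ((one_lt_one_sub_div_iff hc0).2 hc.2) hle
  set u := 1 - c - ((K : ℝ) - 2) * t
  have htu : t ≤ u := by
    rw [le_div_iff₀ (by linarith)] at htt₀
    linarith
  have hmt : 0 ≤ ((K : ℝ) - 2) * t := mul_nonneg (sub_nonneg.2 hK') ht0.le
  set r : ℕ → ℝ := fun k => if k = 0 then c else if k = 1 then u else t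
  have hsplit (φ : ℝ → ℝ) : ∑ k ∈ Ico 1 K, φ (r k) = φ u + ((K : ℝ) - 2) * φ t := by
    have hr : ∀ k ∈ Ico 2 K, φ (r k) = φ t := fun k hk => by
      have := (mem_Ico.1 hk).1
      simp only [r, if_neg (show k ≠ 0 by omega), if_neg (show k ≠ 1 by omega)]
    rw [sum_eq_sum_Ico_succ_bot (by omega), sum_congr rfl hr, sum_const, Nat.card_Ico,
      nsmul_eq_mul, Nat.cast_sub hK]
    simp [r]
  refine ⟨r, fun k _ => ?_, ?_, fun i j hi hij hj => ?_, rfl, ?_⟩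
  · simp only [r]
    split_ifs
    exacts [⟨hc0, by linarith [hc.2]⟩, ⟨ht0.trans_le htu, by linarith⟩, ⟨ht0, by linarith⟩]
  · have hsum := hsplit id
    simp only [id] at hsum
    rw [range_eq_Ico, sum_eq_sum_Ico_succ_bot (by omega), zero_add, hsum]
    simp [r, u]
  · simp only [r]
    split_ifs <;> first | omega | linarith
  · rw [hsplit fun x => x / (1 - x)]
    exact ht

/-- For `K > 2`, the set `S_K` of values `r₁ ∈ (0,1)` for which some configuration
`r ∈ R_K(r₁)` satisfies `p(r) = 1/2` equals the interval `[1/K, 1/2)`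
(names indexed by `0, …, K-1`, with `n₁` corresponding to index `0`). -/
theorem SK_eq_Ico
    (K : ℕ) (hK : 2 < K) :
    {r1 : ℝ | r1 ∈ Set.Ioo (0 : ℝ) 1 ∧ ∃ r : ℕ → ℝ,
        (∀ k < K, r k ∈ Set.Ioo (0 : ℝ) 1) ∧
        (∑ k ∈ Finset.range K, r k = 1) ∧
        (∀ i j, 1 ≤ i → i ≤ j → j < K → r j ≤ r i) ∧
        r 0 = r1 ∧
        2 / (3 + ∑ k ∈ Finset.Ico 1 K, r k / (1 - r k)) = 1 / 2}
      = Set.Ico (1 / (K : ℝ)) (1 / 2) := by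
  have hK' : (2 : ℝ) ≤ K := by exact_mod_cast hK.le
  ext c
  simp only [two_div_three_add_eq_half_iff, Set.mem_ofPred_eq]
  constructor
  · rintro ⟨⟨hc0, -⟩, r, hr, hsum, -, rfl, hf⟩
    have hrest : ∑ k ∈ Ico 1 K, r k = 1 - r 0 := by
      rw [range_eq_Ico, sum_eq_sum_Ico_succ_bot (by omega)] at hsum
      linarith
    have hlower := card_mul_sum_div_le_sum_div_one_sub (Ico 1 K) fun k hk =>
      (hr k (mem_Ico.1 hk).2).2
    rw [hf, hrest, Nat.card_Ico, Nat.cast_sub (by omega), Nat.cast_one] at hlower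
    have hupper := sum_div_one_sub_lt (s := Ico 1 K) (by rw [Nat.card_Ico]; omega)
      (fun k hk => (hr k (mem_Ico.1 hk).2).1) (by linarith)
    rw [hf, hrest] at hupper
    exact ⟨(sub_one_mul_div_le_one_iff hK' hc0).1 hlower, (one_lt_one_sub_div_iff hc0).1 hupper⟩
  · intro hc
    have hc0 : 0 < c := lt_of_lt_of_le (by positivity) hc.1
    exact ⟨⟨hc0, by linarith [hc.2]⟩, exists_sorted_of_mem_Ico hK.le hc⟩
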